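/- arXiv:math/0403307 — 3 statements merged into one kernel-verified Lean document; each statement's English description precedes it below -/
import Mathlib

section
/- Let R be a ring and let A', A, A'', C be R-modules with homomorphisms ρ : A' → C, φ : C → A, φ' : A' → A, η : A → A'', ψ : C → A'' such that the diagram is commutative (φ ∘ ρ = φ' and η ∘ φ = ψ) and the row A' →(φ') A →(η) A'' is exact at A (i.e. im φ' = ker η). Then im φ' ⊆ im φ and there is an isomorphism of R-modules im φ / im φ' ≅ im ψ. -/
/-!
By exactness, `im φ'` is the kernel of `η` restricted to `im φ`, and the image of that
restriction is `η (im φ) = im (η ∘ φ) = im ψ`; the first isomorphism theorem does the rest.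
-/

namespace LinearMap

variable {R M N : Type*} [Ring R] [AddCommGroup M] [AddCommGroup N] [Module R M] [Module R N]

noncomputable def quotComapKerEquivMap (f : M →ₗ[R] N) (p : Submodule R M) :
    (p ⧸ (ker f).comap p.subtype) ≃ₗ[R] p.map f :=
  (Submodule.quotEquivOfEq _ _ (ker_domRestrict p f).symm).trans
    ((f.domRestrict p).quotKerEquivRange.trans (LinearEquiv.ofEq _ _ (range_domRestrict p f)))

end LinearMap

/-- Lemma 6.1 ([Cartan–Eilenberg], Lemma XV 1.1): given a commutative diagram of
`R`-modules with exact row `A' → A → A''` and a module `C` mapping compatibly to each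
term, one has `im φ' ⊆ im φ` and `im φ / im φ' ≅ im ψ`. -/
theorem im_quotient_iso_im_of_commutative_diagram
    {R : Type*} [Ring R] {A' A A'' C : Type*}
    [AddCommGroup A'] [AddCommGroup A] [AddCommGroup A''] [AddCommGroup C]
    [Module R A'] [Module R A] [Module R A''] [Module R C]
    (ρ : A' →ₗ[R] C) (φ : C →ₗ[R] A) (φ' : A' →ₗ[R] A)
    (η : A →ₗ[R] A'') (ψ : C →ₗ[R] A'')
    (hcomm₁ : φ.comp ρ = φ') (hcomm₂ : η.comp φ = ψ)
    (hexact : LinearMap.range φ' = LinearMap.ker η) :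
    LinearMap.range φ' ≤ LinearMap.range φ ∧
    Nonempty
      ((↥(LinearMap.range φ) ⧸
          (LinearMap.range φ').comap (LinearMap.range φ).subtype) ≃ₗ[R]
        ↥(LinearMap.range ψ)) := by
  refine ⟨hcomm₁ ▸ LinearMap.range_comp_le_range ρ φ, ?_⟩
  rw [hexact, ← hcomm₂, LinearMap.range_comp]
  exact ⟨η.quotComapKerEquivMap _⟩
end

section
/- Work in ℝ^{n+1} (n ≥ 1) with the standard inner product ⟨·,·⟩ and standard basis e₁,…,e_{n+1}. For 1 ≤ t ≤ n let α_t := e_t − e_{t+1} (the simple roots of type A_n), and for 1 ≤ j ≤ n let λ_j := e₁+⋯+e_j − (j/(n+1))(e₁+⋯+e_{n+1}) (the fundamental weights, satisfying ⟨λ_j, α_t⟩ = δ_{jt}); set λ₀ = λ_{n+1} := 0. For a vector β with ⟨β,β⟩ = 2 let r_β(v) := v − ⟨v,β⟩β denote the orthogonal reflection in the hyperplane orthogonal to β. Then for every 1 ≤ i ≤ n and all real numbers p₁,…,p_n: r_{α₁} ∘ r_{α₂} ∘ ⋯ ∘ r_{α_i} ( Σ_{j=1}^{n} p_j λ_j )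 = (−Σ_{j=1}^{i} p_j) λ₁ + Σ_{j=1}^{i} p_j λ_{j+1} + Σ_{j=i+1}^{n} p_j λ_j. -/
open Finset

/-- The standard basis vector `e_i` of `ℝ^{n+1}` (1-indexed, `1 ≤ i ≤ n+1`). -/
noncomputable def stdVec (n : ℕ) (i : ℕ) : EuclideanSpace ℝ (Fin (n + 1)) :=
  if h : 1 ≤ i ∧ i ≤ n + 1 then EuclideanSpace.single ⟨i - 1, by omega⟩ 1 else 0

/-- The simple root `α_t = e_t − e_{t+1}` of type `A_n` (1-indexed, `1 ≤ t ≤ n`). -/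
noncomputable def simpleRoot (n : ℕ) (t : ℕ) : EuclideanSpace ℝ (Fin (n + 1)) :=
  stdVec n t - stdVec n (t + 1)

/-- The fundamental weight `λ_j = e₁ + ⋯ + e_j − (j/(n+1))(e₁ + ⋯ + e_{n+1})`
(with `λ_0 = λ_{n+1} = 0`). -/
noncomputable def fundWeight (n : ℕ) (j : ℕ) : EuclideanSpace ℝ (Fin (n + 1)) :=
  (∑ i ∈ Icc 1 j, stdVec n i) -
    ((j : ℝ) / (n + 1)) • ∑ i ∈ Icc 1 (n + 1), stdVec n i

/-- The reflection `r_β(v) = v − ⟨v, β⟩ β` (orthogonal reflection when `⟨β,β⟩ = 2`). -/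
noncomputable def reflRoot (n : ℕ) (β v : EuclideanSpace ℝ (Fin (n + 1))) :
    EuclideanSpace ℝ (Fin (n + 1)) :=
  v - (@inner ℝ _ _ v β) • β

/-- The composition `r_{α₁} ∘ r_{α₂} ∘ ⋯ ∘ r_{α_i}`. -/
noncomputable def reflComp (n : ℕ) :
    ℕ → (EuclideanSpace ℝ (Fin (n + 1)) → EuclideanSpace ℝ (Fin (n + 1)))
  | 0 => id
  | (t + 1) => reflComp n t ∘ reflRoot n (simpleRoot n (t + 1))

lemma fundWeight_zero (n : ℕ) : fundWeight n 0 = 0 := by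
  simp [fundWeight]

lemma fundWeight_top (n : ℕ) : fundWeight n (n + 1) = 0 := by
  have h : ((n : ℝ) + 1) / ((n : ℝ) + 1) = 1 := by
    rw [div_self]; positivity
  simp [fundWeight, h]

lemma inner_stdVec (n a b : ℕ) (ha1 : 1 ≤ a) (ha2 : a ≤ n + 1) (hb1 : 1 ≤ b) (hb2 : b ≤ n + 1) :
    (@inner ℝ _ _ (stdVec n a) (stdVec n b)) = if a = b then 1 else 0 := by
  rw [stdVec, stdVec, dif_pos ⟨ha1, ha2⟩, dif_pos ⟨hb1, hb2⟩]
  rw [show ((1:ℝ)) = ((1:ℝ) : ℝ) from rfl, EuclideanSpace.inner_single_left]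
  simp only [map_one, one_mul, EuclideanSpace.single_apply, Fin.mk.injEq]
  split_ifs with h1 h2 h2 <;> first | rfl | omega

lemma inner_sum_stdVec (n m t : ℕ) (hm : m ≤ n + 1) (ht1 : 1 ≤ t) (ht2 : t ≤ n + 1) :
    (@inner ℝ _ _ (∑ i ∈ Icc 1 m, stdVec n i) (stdVec n t)) = if t ≤ m then 1 else 0 := by
  rw [sum_inner]
  have h1 : ∑ i ∈ Icc 1 m, (@inner ℝ _ _ (stdVec n i) (stdVec n t)) =
      ∑ i ∈ Icc 1 m, if i = t then (1:ℝ) else 0 := by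
    refine Finset.sum_congr rfl (fun i hi => ?_)
    rw [Finset.mem_Icc] at hi
    exact inner_stdVec n i t hi.1 (le_trans hi.2 hm) ht1 ht2
  rw [h1, Finset.sum_ite_eq' (Icc 1 m) t (fun _ => (1:ℝ))]
  simp [Finset.mem_Icc, ht1]

lemma inner_fundWeight_simpleRoot (n j t : ℕ) (hj : j ≤ n + 1) (ht1 : 1 ≤ t) (ht2 : t ≤ n) :
    (@inner ℝ _ _ (fundWeight n j) (simpleRoot n t)) = if j = t then 1 else 0 := by
  rw [fundWeight, simpleRoot]
  rw [inner_sub_left, inner_sub_right, inner_sub_right, real_inner_smul_left, real_inner_smul_left]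
  rw [inner_sum_stdVec n j t hj ht1 (by omega),
      inner_sum_stdVec n j (t+1) hj (by omega) (by omega),
      inner_sum_stdVec n (n+1) t le_rfl ht1 (by omega),
      inner_sum_stdVec n (n+1) (t+1) le_rfl (by omega) (by omega)]
  rw [if_pos (by omega : t ≤ n + 1), if_pos (by omega : t + 1 ≤ n + 1)]
  split_ifs with h1 h2 h3 <;> (try omega) <;> ring

lemma simpleRoot_succ (n t : ℕ) (ht : t + 1 ≤ n) :
    simpleRoot n (t + 1) =
      (2 : ℝ) • fundWeight n (t + 1) - fundWeight n t - fundWeight n (t + 2) := by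
  rw [simpleRoot, fundWeight, fundWeight, fundWeight]
  rw [Finset.sum_Icc_succ_top (by omega : 1 ≤ t + 1) (stdVec n),
      Finset.sum_Icc_succ_top (by omega : 1 ≤ t + 2) (stdVec n),
      Finset.sum_Icc_succ_top (by omega : 1 ≤ t + 1) (stdVec n)]
  have hc : ((t:ℝ) + 2) / ((n:ℝ) + 1) = 2 * (((t:ℝ)+1) / ((n:ℝ)+1)) - (t:ℝ)/((n:ℝ)+1) := by
    ring
  push_cast
  rw [hc]
  module

example (n t : ℕ): True := trivial

lemma reflRoot_add (n : ℕ) (β v w : EuclideanSpace ℝ (Fin (n + 1))) :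
    reflRoot n β (v + w) = reflRoot n β v + reflRoot n β w := by
  simp only [reflRoot, inner_add_left, add_smul]
  abel

lemma reflRoot_smul (n : ℕ) (β : EuclideanSpace ℝ (Fin (n + 1))) (c : ℝ)
    (v : EuclideanSpace ℝ (Fin (n + 1))) :
    reflRoot n β (c • v) = c • reflRoot n β v := by
  simp only [reflRoot, real_inner_smul_left, smul_sub, smul_smul]

lemma reflComp_add (n i : ℕ) (v w : EuclideanSpace ℝ (Fin (n + 1))) :
    reflComp n i (v + w) = reflComp n i v + reflComp n i w := by
  induction i generalizing v w with
  | zero => rfl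
  | succ t ih => simp only [reflComp, Function.comp_apply, reflRoot_add, ih]

lemma reflComp_smul (n i : ℕ) (c : ℝ) (v : EuclideanSpace ℝ (Fin (n + 1))) :
    reflComp n i (c • v) = c • reflComp n i v := by
  induction i generalizing v with
  | zero => rfl
  | succ t ih => simp only [reflComp, Function.comp_apply, reflRoot_smul, ih]

lemma reflComp_zero (n i : ℕ) : reflComp n i 0 = 0 := by
  have := reflComp_smul n i 0 0
  simpa using this

lemma reflComp_sub (n i : ℕ) (v w : EuclideanSpace ℝ (Fin (n + 1))) :
    reflComp n i (v - w) = reflComp n i v - reflComp n i w := by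
  have h := reflComp_add n i (v - w) w
  simp only [sub_add_cancel] at h
  rw [h]; abel

lemma reflComp_sum (n i : ℕ) (s : Finset ℕ) (f : ℕ → EuclideanSpace ℝ (Fin (n + 1))) :
    reflComp n i (∑ j ∈ s, f j) = ∑ j ∈ s, reflComp n i (f j) := by
  classical
  induction s using Finset.induction with
  | empty => simpa using reflComp_zero n i
  | insert _ _ hx ih =>
      rw [Finset.sum_insert hx, Finset.sum_insert hx, reflComp_add, ih]

lemma reflRoot_fundWeight (n j t : ℕ) (hj : j ≤ n + 1) (ht1 : 1 ≤ t) (ht2 : t ≤ n) :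
    reflRoot n (simpleRoot n t) (fundWeight n j) =
      fundWeight n j - (if j = t then (1:ℝ) else 0) • simpleRoot n t := by
  rw [reflRoot, inner_fundWeight_simpleRoot n j t hj ht1 ht2]

lemma reflComp_fundWeight (n : ℕ) (hn : 1 ≤ n) (i : ℕ) (hi1 : 1 ≤ i) (hi2 : i ≤ n) :
    ∀ j, 1 ≤ j → j ≤ n →
      reflComp n i (fundWeight n j) =
        if j ≤ i then fundWeight n (j + 1) - fundWeight n 1 else fundWeight n j := by
  induction i, hi1 using Nat.le_induction with
  | base =>
      intro j hj1 hj2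
      show reflComp n 0 (reflRoot n (simpleRoot n (0 + 1)) (fundWeight n j)) = _
      rw [show (0:ℕ) + 1 = 1 from rfl]
      rw [reflRoot_fundWeight n j 1 (by omega) le_rfl hn]
      show fundWeight n j - (if j = 1 then (1:ℝ) else 0) • simpleRoot n 1 = _
      by_cases h : j = 1
      · subst h
        have hs : simpleRoot n 1 = (2:ℝ) • fundWeight n 1 - fundWeight n 0 - fundWeight n 2 :=
          simpleRoot_succ n 0 hn
        rw [if_pos rfl, if_pos le_rfl, one_smul, hs, fundWeight_zero,
            show (1:ℕ) + 1 = 2 from rfl]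
        module
      · rw [if_neg h, if_neg (by omega), zero_smul, sub_zero]
  | succ i hi ih =>
      intro j hj1 hj2
      have hik : i ≤ n := by omega
      show reflComp n i (reflRoot n (simpleRoot n (i + 1)) (fundWeight n j)) = _
      rw [reflRoot_fundWeight n j (i + 1) (by omega) (by omega) hi2]
      by_cases h : j = i + 1
      · subst h
        rw [if_pos rfl, one_smul, simpleRoot_succ n i hi2]
        have hrw : fundWeight n (i + 1) -
            ((2:ℝ) • fundWeight n (i+1) - fundWeight n i - fundWeight n (i+2)) =
            (fundWeight n i - fundWeight n (i+1)) + fundWeight n (i+2) := by module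
        rw [hrw, reflComp_add, reflComp_sub]
        rw [ih hik i (by omega) (by omega), ih hik (i+1) (by omega) (by omega)]
        rw [if_pos le_rfl, if_neg (by omega)]
        have h2 : reflComp n i (fundWeight n (i + 2)) = fundWeight n (i + 2) := by
          by_cases hc : i + 2 ≤ n
          · rw [ih hik (i+2) (by omega) hc, if_neg (by omega)]
          · have : i + 2 = n + 1 := by omega
            rw [this, fundWeight_top, reflComp_zero]
        rw [h2, if_pos (le_refl (i+1)), show i+1+1 = i+2 from rfl]
        module
      · rw [if_neg h, zero_smul, sub_zero, ih hik j hj1 hj2]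
        by_cases hc : j ≤ i
        · rw [if_pos hc, if_pos (by omega)]
        · rw [if_neg hc, if_neg (by omega)]


/-- The key computation in the proof of Proposition 4.6:
`r_{α₁} ∘ ⋯ ∘ r_{α_i} (Σ_{j=1}^n p_j λ_j)
  = (−Σ_{j=1}^i p_j) λ₁ + Σ_{j=1}^i p_j λ_{j+1} + Σ_{j=i+1}^n p_j λ_j`. -/
theorem reflComp_apply_sum_fundWeight
    (n : ℕ) (hn : 1 ≤ n) (i : ℕ) (hi1 : 1 ≤ i) (hi2 : i ≤ n) (p : ℕ → ℝ) :
    reflComp n i (∑ j ∈ Icc 1 n, p j • fundWeight n j) =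
      (-(∑ j ∈ Icc 1 i, p j)) • fundWeight n 1 +
      (∑ j ∈ Icc 1 i, p j • fundWeight n (j + 1)) +
      (∑ j ∈ Icc (i + 1) n, p j • fundWeight n j) := by
  have hIoc : ∀ m : ℕ, Icc 1 m = Ioc 0 m := fun m => Finset.Icc_add_one_left_eq_Ioc 0 m
  have hIoc2 : Icc (i + 1) n = Ioc i n := Finset.Icc_add_one_left_eq_Ioc i n
  rw [reflComp_sum]
  have hsum : ∑ j ∈ Icc 1 n, reflComp n i (p j • fundWeight n j) =
      ∑ j ∈ Icc 1 n, p j •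
        (if j ≤ i then fundWeight n (j + 1) - fundWeight n 1 else fundWeight n j) := by
    refine Finset.sum_congr rfl (fun j hj => ?_)
    rw [Finset.mem_Icc] at hj
    rw [reflComp_smul, reflComp_fundWeight n hn i hi1 hi2 j hj.1 hj.2]
  rw [hsum, hIoc n, ← Finset.sum_Ioc_consecutive _ (Nat.zero_le i) hi2]
  have h1 : ∑ j ∈ Ioc 0 i, p j •
      (if j ≤ i then fundWeight n (j + 1) - fundWeight n 1 else fundWeight n j) =
      (∑ j ∈ Ioc 0 i, p j • fundWeight n (j + 1)) -
        (∑ j ∈ Ioc 0 i, p j) • fundWeight n 1 := by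
    rw [Finset.sum_smul, ← Finset.sum_sub_distrib]
    refine Finset.sum_congr rfl (fun j hj => ?_)
    rw [Finset.mem_Ioc] at hj
    rw [if_pos hj.2, smul_sub]
  have h2 : ∑ j ∈ Ioc i n, p j •
      (if j ≤ i then fundWeight n (j + 1) - fundWeight n 1 else fundWeight n j) =
      ∑ j ∈ Ioc i n, p j • fundWeight n j := by
    refine Finset.sum_congr rfl (fun j hj => ?_)
    rw [Finset.mem_Ioc] at hj
    rw [if_neg (by omega)]
  rw [h1, h2, hIoc i, hIoc2, neg_smul]
  abel
end

section
/- Let Λ = ⋀(ℂ²) be the exterior algebra on generators x, y, and let C₁ (size 1×2), C₂ (size 2×3), B₁ (size 2×1), B₂ (size 3×2) be the matrices over Λ defined by (C_k)_{i,i} = x/(k+1), (C_k)_{i,i+1} = y/(k+1), other entries 0, and (B_k)_{i,i} = −(k+1−i)y/k, (B_k)_{i+1,i} = i·x/k, other entries 0. Let a, b, c, d be positive integers and let γ₁ : ℂ^b → ℂ^a, β₁ : ℂ^a → ℂ^c, β₂ : ℂ^b → ℂ^d, γ₂ : ℂ^d → ℂ^c be linear maps (identified with complex matrices). Form the square block matrix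 over Λ, with block rows and columns of sizes 2c, 3d, a, 2b: N := [[0, γ₂⊗C₂, β₁⊗B₁, 0], [0, 0, 0, β₂⊗B₂], [0, 0, 0, γ₁⊗C₁], [0, 0, 0, 0]], where ⊗ denotes the Kronecker product of a complex matrix with a matrix over Λ. Then N ∧ N = 0 (the matrix square of N, with entries multiplied in Λ) if and only if γ₂ ∘ β₂ = β₁ ∘ γ₁. -/
/-- The exterior algebra `⋀(ℂ²)`. -/
noncomputable abbrev ExtAlg : Type := ExteriorAlgebra ℂ (Fin 2 → ℂ)

/-- The generator `x` of `⋀(ℂ²)`. -/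
noncomputable def xGen : ExtAlg := ExteriorAlgebra.ι ℂ (Pi.single 0 1)

/-- The generator `y` of `⋀(ℂ²)`. -/
noncomputable def yGen : ExtAlg := ExteriorAlgebra.ι ℂ (Pi.single 1 1)

/-- The `k × (k+1)` matrix `C_k` over `⋀(ℂ²)`. -/
noncomputable def Cmat (k : ℕ) : Matrix (Fin k) (Fin (k + 1)) ExtAlg := fun i j =>
  if (j : ℕ) = (i : ℕ) then ((k + 1 : ℂ))⁻¹ • xGen
  else if (j : ℕ) = (i : ℕ) + 1 then ((k + 1 : ℂ))⁻¹ • yGen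
  else 0

/-- The `(k+1) × k` matrix `B_k` over `⋀(ℂ²)`. -/
noncomputable def Bmat (k : ℕ) : Matrix (Fin (k + 1)) (Fin k) ExtAlg := fun i j =>
  if (i : ℕ) = (j : ℕ) then (-((k : ℂ) - (j : ℕ)) / (k : ℂ)) • yGen
  else if (i : ℕ) = (j : ℕ) + 1 then ((((j : ℕ) : ℂ) + 1) / (k : ℂ)) • xGen
  else 0

/-- Index type for the block matrix, with block sizes `2c`, `3d`, `a`, `2b`. -/
abbrev BlockIdx (a b c d : ℕ) : Type :=
  (Fin c × Fin 2) ⊕ (Fin d × Fin 3) ⊕ (Fin a × Fin 1) ⊕ (Fin b × Fin 2)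

/-- The block matrix
`N = [[0, γ₂⊗C₂, β₁⊗B₁, 0], [0,0,0, β₂⊗B₂], [0,0,0, γ₁⊗C₁], [0,0,0,0]]`,
where `⊗` is the Kronecker product of a complex matrix with a matrix over `⋀(ℂ²)`. -/
noncomputable def blockN (a b c d : ℕ)
    (γ₁ : Matrix (Fin a) (Fin b) ℂ) (β₁ : Matrix (Fin c) (Fin a) ℂ)
    (β₂ : Matrix (Fin d) (Fin b) ℂ) (γ₂ : Matrix (Fin c) (Fin d) ℂ) :
    Matrix (BlockIdx a b c d) (BlockIdx a b c d) ExtAlg := fun i j =>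
  match i, j with
  | Sum.inl i, Sum.inr (Sum.inl j) => Matrix.kroneckerMap (· • ·) γ₂ (Cmat 2) i j
  | Sum.inl i, Sum.inr (Sum.inr (Sum.inl j)) => Matrix.kroneckerMap (· • ·) β₁ (Bmat 1) i j
  | Sum.inr (Sum.inl i), Sum.inr (Sum.inr (Sum.inr j)) =>
      Matrix.kroneckerMap (· • ·) β₂ (Bmat 2) i j
  | Sum.inr (Sum.inr (Sum.inl i)), Sum.inr (Sum.inr (Sum.inr j)) =>
      Matrix.kroneckerMap (· • ·) γ₁ (Cmat 1) i j
  | _, _ => 0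


section Aux

lemma xx : xGen * xGen = 0 := ExteriorAlgebra.ι_sq_zero _
lemma yy : yGen * yGen = 0 := ExteriorAlgebra.ι_sq_zero _
lemma yx : yGen * xGen = -(xGen * yGen) :=
  eq_neg_of_add_eq_zero_left (by
    rw [xGen, yGen, add_comm]
    exact ExteriorAlgebra.ι_add_mul_swap (R := ℂ) _ _)

lemma CB2 : Cmat 2 * Bmat 2 =
    fun i j => if i = j then (-(2 : ℂ)⁻¹) • (xGen * yGen) else 0 := by
  ext i j
  fin_cases i <;> fin_cases j <;>
    simp [Matrix.mul_apply, Fin.sum_univ_succ, Cmat, Bmat, smul_mul_smul_comm,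
      xx, yy, yx, smul_smul] <;>
    (match_scalars; norm_num)

lemma BC1 : Bmat 1 * Cmat 1 =
    fun i j => if i = j then ((2 : ℂ)⁻¹) • (xGen * yGen) else 0 := by
  ext i j
  fin_cases i <;> fin_cases j <;>
    simp [Matrix.mul_apply, Fin.sum_univ_succ, Cmat, Bmat, smul_mul_smul_comm,
      xx, yy, yx, smul_smul] <;>
    (match_scalars; norm_num)

lemma kron_sum {m n : Type*} [Fintype m] [Fintype n]
    {p q r s : Type*} (A : Matrix p m ℂ) (B : Matrix m q ℂ)
    (E : Matrix r n ExtAlg) (F : Matrix n s ExtAlg)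
    (i : p) (j : q) (u : r) (v : s) :
    ∑ x : m × n, (A i x.1 • E u x.2) * (B x.1 j • F x.2 v) =
      (A * B) i j • (E * F) u v := by
  rw [Fintype.sum_prod_type, Matrix.mul_apply, Matrix.mul_apply, Finset.sum_smul]
  refine Finset.sum_congr rfl fun x _ => ?_
  rw [Finset.smul_sum]
  refine Finset.sum_congr rfl fun y _ => ?_
  rw [smul_mul_smul_comm]

lemma key_entry (a b c d : ℕ)
    (γ₁ : Matrix (Fin a) (Fin b) ℂ) (β₁ : Matrix (Fin c) (Fin a) ℂ)
    (β₂ : Matrix (Fin d) (Fin b) ℂ) (γ₂ : Matrix (Fin c) (Fin d) ℂ)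
    (i : Fin c) (p : Fin 2) (j : Fin b) (q : Fin 2) :
    (blockN a b c d γ₁ β₁ β₂ γ₂ * blockN a b c d γ₁ β₁ β₂ γ₂)
      (Sum.inl (i, p)) (Sum.inr (Sum.inr (Sum.inr (j, q)))) =
      (if p = q then ((β₁ * γ₁) i j - (γ₂ * β₂) i j) * (2 : ℂ)⁻¹ else 0) •
        (xGen * yGen) := by
  rw [Matrix.mul_apply, Fintype.sum_sum_type, Fintype.sum_sum_type, Fintype.sum_sum_type]
  have h1 : ∀ x : Fin c × Fin 2,
      blockN a b c d γ₁ β₁ β₂ γ₂ (Sum.inl (i, p)) (Sum.inl x) *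
        blockN a b c d γ₁ β₁ β₂ γ₂ (Sum.inl x) (Sum.inr (Sum.inr (Sum.inr (j, q)))) = 0 := by
    intro x; simp [blockN]
  have h4 : ∀ x : Fin b × Fin 2,
      blockN a b c d γ₁ β₁ β₂ γ₂ (Sum.inl (i, p)) (Sum.inr (Sum.inr (Sum.inr x))) *
        blockN a b c d γ₁ β₁ β₂ γ₂ (Sum.inr (Sum.inr (Sum.inr x)))
          (Sum.inr (Sum.inr (Sum.inr (j, q)))) = 0 := by
    intro x; simp [blockN]
  simp only [h1, h4, Finset.sum_const_zero, zero_add, add_zero]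
  have h2 : ∑ x : Fin d × Fin 3,
      blockN a b c d γ₁ β₁ β₂ γ₂ (Sum.inl (i, p)) (Sum.inr (Sum.inl x)) *
        blockN a b c d γ₁ β₁ β₂ γ₂ (Sum.inr (Sum.inl x))
          (Sum.inr (Sum.inr (Sum.inr (j, q)))) =
      (γ₂ * β₂) i j • (Cmat 2 * Bmat 2) p q := by
    rw [← kron_sum γ₂ β₂ (Cmat 2) (Bmat 2) i j p q]
    exact Finset.sum_congr rfl fun x _ => rfl
  have h3 : ∑ x : Fin a × Fin 1,
      blockN a b c d γ₁ β₁ β₂ γ₂ (Sum.inl (i, p)) (Sum.inr (Sum.inr (Sum.inl x))) *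
        blockN a b c d γ₁ β₁ β₂ γ₂ (Sum.inr (Sum.inr (Sum.inl x)))
          (Sum.inr (Sum.inr (Sum.inr (j, q)))) =
      (β₁ * γ₁) i j • (Bmat 1 * Cmat 1) p q := by
    rw [← kron_sum β₁ γ₁ (Bmat 1) (Cmat 1) i j p q]
    exact Finset.sum_congr rfl fun x _ => rfl
  rw [h2, h3, CB2, BC1]
  by_cases hpq : p = q <;> simp [hpq, smul_smul] <;> (ring_nf; module)

noncomputable def detF : ∀ i, (Fin 2 → ℂ) [⋀^Fin i]→ₗ[ℂ] ℂ
  | 2 => Matrix.detRowAlternating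
  | _ => 0

lemma xy_ne : xGen * yGen ≠ 0 := by
  intro h
  have h2 : ExteriorAlgebra.liftAlternating detF (xGen * yGen) = 1 := by
    rw [xGen, yGen, ExteriorAlgebra.liftAlternating_ι_mul,
      ExteriorAlgebra.liftAlternating_ι]
    show (Matrix.detRowAlternating.curryLeft _) _ = 1
    rw [AlternatingMap.curryLeft_apply_apply]
    change Matrix.det _ = 1
    simp [Matrix.det_fin_two, Pi.single_apply]
    refine (Matrix.det_fin_two _).trans ?_; simp [Pi.single_apply]
  rw [h, map_zero] at h2
  exact zero_ne_one h2

end Aux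

set_option maxHeartbeats 1600000 in

/-- Example 5.13: `N ∧ N = 0` if and only if `γ₂ ∘ β₂ = β₁ ∘ γ₁`. -/
theorem blockN_sq_eq_zero_iff (a b c d : ℕ)
    (ha : 1 ≤ a) (hb : 1 ≤ b) (hc : 1 ≤ c) (hd : 1 ≤ d)
    (γ₁ : Matrix (Fin a) (Fin b) ℂ) (β₁ : Matrix (Fin c) (Fin a) ℂ)
    (β₂ : Matrix (Fin d) (Fin b) ℂ) (γ₂ : Matrix (Fin c) (Fin d) ℂ) :
    blockN a b c d γ₁ β₁ β₂ γ₂ * blockN a b c d γ₁ β₁ β₂ γ₂ = 0 ↔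
      γ₂ * β₂ = β₁ * γ₁ := by
  constructor
  · intro h
    ext i j
    have h0 := congrFun (congrFun h (Sum.inl (i, 0))) (Sum.inr (Sum.inr (Sum.inr (j, 0))))
    rw [key_entry] at h0
    simp only [if_pos rfl, Matrix.zero_apply] at h0
    rcases smul_eq_zero.mp h0 with h' | h'
    · rcases mul_eq_zero.mp h' with h'' | h''
      · linear_combination -h''
      · norm_num at h''
    · exact absurd h' xy_ne
  · intro h
    ext i j
    rcases i with ⟨i, p⟩ | ⟨i, p⟩ | ⟨i, p⟩ | ⟨i, p⟩ <;>
      rcases j with j | j | j | j <;>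
      try (rw [Matrix.mul_apply]; simp [Fintype.sum_sum_type, blockN]; done)
    rcases j with ⟨j, q⟩
    rw [key_entry, h]
    simp
end
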